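/- arXiv:2503.07988 — 5 statements merged into one kernel-verified Lean document; each statement's English description precedes it below -/
import Mathlib

section
/- For any distributions p*, p over a finite action set A, any function Q: A → [0, H], and any α > 0, if p' is defined by p'(a) ∝ p(a)·exp(α·Q(a)), then ⟨Q, p* − p⟩ ≤ αH²/2 + α⁻¹·(KL(p*‖p) − KL(p*‖p')). -/
open Finset

/-- Quadratic upper bound on `exp (-y)` for `y ≥ 0`. -/
lemma exp_neg_le_quadratic {y : ℝ} (hy : 0 ≤ y) :
    Real.exp (-y) ≤ 1 - y + y ^ 2 / 2 := by
  have h1 : 1 + y + y ^ 2 / 2 ≤ Real.exp y := Real.quadratic_le_exp_of_nonneg hy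
  have h2 : Real.exp (-y) * Real.exp y = 1 := by
    rw [← Real.exp_add]; simp
  have h3 : 0 < Real.exp (-y) := Real.exp_pos _
  nlinarith [sq_nonneg y, sq_nonneg (y ^ 2)]

/-- One-step mirror descent (exponential weights) inequality:
for distributions `pstar, p` on a finite action set `A` with `p > 0`,
`Q : A → [0, H]`, `α > 0`, and `p'(a) ∝ p(a) · exp(α · Q(a))`, we have
`⟨Q, pstar − p⟩ ≤ αH²/2 + α⁻¹ (KL(pstar‖p) − KL(pstar‖p'))`. -/
theorem one_step_mirror_descent
    {A : Type*} [Fintype A] [Nonempty A]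
    (H α : ℝ) (hH : 0 ≤ H) (hα : 0 < α)
    (pstar p : A → ℝ)
    (hpstar_nonneg : ∀ a, 0 ≤ pstar a) (hpstar_sum : ∑ a, pstar a = 1)
    (hp_pos : ∀ a, 0 < p a) (hp_sum : ∑ a, p a = 1)
    (Q : A → ℝ) (hQ : ∀ a, Q a ∈ Set.Icc (0 : ℝ) H)
    (p' : A → ℝ)
    (hp' : ∀ a, p' a = p a * Real.exp (α * Q a) / ∑ b, p b * Real.exp (α * Q b)) :
    ∑ a, Q a * (pstar a - p a) ≤
      α * H ^ 2 / 2 +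
        α⁻¹ * ((∑ a, pstar a * Real.log (pstar a / p a))
          - (∑ a, pstar a * Real.log (pstar a / p' a))) := by
  set Z : ℝ := ∑ b, p b * Real.exp (α * Q b) with hZdef
  have hZpos : 0 < Z :=
    Finset.sum_pos (fun b _ => mul_pos (hp_pos b) (Real.exp_pos _)) univ_nonempty
  -- Step A: the KL difference equals α⟨Q, pstar⟩ - log Z
  have keyA : (∑ a, pstar a * Real.log (pstar a / p a))
      - (∑ a, pstar a * Real.log (pstar a / p' a))
      = α * (∑ a, pstar a * Q a) - Real.log Z := by
    have pointwise : ∀ a, pstar a * Real.log (pstar a / p a)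
        - pstar a * Real.log (pstar a / p' a)
        = pstar a * (α * Q a - Real.log Z) := by
      intro a
      rcases eq_or_lt_of_le (hpstar_nonneg a) with h0 | hpos
      · simp [← h0]
      · have hpa := hp_pos a
        have hexp := Real.exp_pos (α * Q a)
        have hp'a : p' a = p a * Real.exp (α * Q a) / Z := hp' a
        have hp'pos : 0 < p' a := by
          rw [hp'a]; positivity
        rw [Real.log_div (ne_of_gt hpos) (ne_of_gt hpa),
            Real.log_div (ne_of_gt hpos) (ne_of_gt hp'pos), hp'a,
            Real.log_div (by positivity) (ne_of_gt hZpos),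
            Real.log_mul (ne_of_gt hpa) (ne_of_gt hexp), Real.log_exp]
        ring
    calc (∑ a, pstar a * Real.log (pstar a / p a))
        - (∑ a, pstar a * Real.log (pstar a / p' a))
        = ∑ a, (pstar a * Real.log (pstar a / p a)
            - pstar a * Real.log (pstar a / p' a)) := by
          rw [Finset.sum_sub_distrib]
      _ = ∑ a, pstar a * (α * Q a - Real.log Z) := by
          exact Finset.sum_congr rfl fun a _ => pointwise a
      _ = α * (∑ a, pstar a * Q a) - Real.log Z := by
          simp only [mul_sub]
          rw [Finset.sum_sub_distrib, ← Finset.sum_mul, hpstar_sum, one_mul,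
            Finset.mul_sum]
          congr 1
          exact Finset.sum_congr rfl fun a _ => by ring
  -- Step B: log Z ≤ α ⟨Q, p⟩ + α² H² / 2
  have keyB : Real.log Z ≤ α * (∑ a, p a * Q a) + α ^ 2 * H ^ 2 / 2 := by
    set S : ℝ := ∑ a, p a * Real.exp (α * (Q a - H)) with hSdef
    have hSpos : 0 < S :=
      Finset.sum_pos (fun b _ => mul_pos (hp_pos b) (Real.exp_pos _)) univ_nonempty
    have hZS : Z = Real.exp (α * H) * S := by
      rw [hSdef, Finset.mul_sum]
      refine Finset.sum_congr rfl fun a _ => ?_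
      rw [mul_comm (Real.exp (α * H)), mul_assoc, ← Real.exp_add]
      ring_nf
    have hSle : S ≤ 1 - α * H + α * (∑ a, p a * Q a) + α ^ 2 * H ^ 2 / 2 := by
      have hterm : ∀ a, p a * Real.exp (α * (Q a - H))
          ≤ p a - α * H * p a + α * (p a * Q a) + α ^ 2 * H ^ 2 / 2 * p a := by
        intro a
        obtain ⟨hQ0, hQH⟩ := hQ a
        have hy : 0 ≤ α * (H - Q a) := mul_nonneg hα.le (by linarith)
        have hb := exp_neg_le_quadratic hy
        have hpa := (hp_pos a).le
        have hsq : (H - Q a) ^ 2 ≤ H ^ 2 := by nlinarith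
        have heq : α * (Q a - H) = -(α * (H - Q a)) := by ring
        rw [heq]
        nlinarith [mul_le_mul_of_nonneg_left hb hpa,
          mul_le_mul_of_nonneg_left hsq (mul_nonneg hpa (sq_nonneg α))]
      calc S ≤ ∑ a, (p a - α * H * p a + α * (p a * Q a) + α ^ 2 * H ^ 2 / 2 * p a) :=
            Finset.sum_le_sum fun a _ => hterm a
        _ = 1 - α * H + α * (∑ a, p a * Q a) + α ^ 2 * H ^ 2 / 2 := by
            simp only [Finset.sum_add_distrib, Finset.sum_sub_distrib, ← Finset.mul_sum, hp_sum]
            ring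
    have hlogS : Real.log S ≤ S - 1 := Real.log_le_sub_one_of_pos hSpos
    calc Real.log Z = α * H + Real.log S := by
          rw [hZS, Real.log_mul (Real.exp_ne_zero _) (ne_of_gt hSpos), Real.log_exp]
      _ ≤ α * H + (S - 1) := by linarith
      _ ≤ α * (∑ a, p a * Q a) + α ^ 2 * H ^ 2 / 2 := by linarith
  -- Combine
  rw [keyA]
  have hexpand : ∑ a, Q a * (pstar a - p a)
      = (∑ a, pstar a * Q a) - (∑ a, p a * Q a) := by
    rw [← Finset.sum_sub_distrib]
    exact Finset.sum_congr rfl fun a _ => by ring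
  rw [hexpand]
  have hαinv : α⁻¹ * (α * (∑ a, pstar a * Q a) - Real.log Z)
      = (∑ a, pstar a * Q a) - α⁻¹ * Real.log Z := by
    field_simp
  rw [hαinv]
  have h1 : α⁻¹ * Real.log Z ≤ (∑ a, p a * Q a) + α * H ^ 2 / 2 := by
    have := mul_le_mul_of_nonneg_left keyB (le_of_lt (inv_pos.mpr hα))
    have hαne : α ≠ 0 := ne_of_gt hα
    calc α⁻¹ * Real.log Z ≤ α⁻¹ * (α * (∑ a, p a * Q a) + α ^ 2 * H ^ 2 / 2) := this
      _ = (∑ a, p a * Q a) + α * H ^ 2 / 2 := by field_simp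
  linarith
end

section
/- In a finite-horizon episodic MDP with horizon H, suppose pessimistic Q-estimates are constructed as Q̂_h(x,a) = max(0, min(H−h+1, (𝔹̂_h V̂_{h+1})(x,a) − Γ_h(x,a))) and V̂_h(x) = ⟨Q̂_h(x,·), π_h(·|x)⟩ with V̂_{H+1} = 0, where |(𝔹̂_h V̂_{h+1})(x,a) − (𝔹_h V̂_{h+1})(x,a)| ≤ Γ_h(x,a) holds for all (x,a,h). Then the model estimation error ι_h(x,a) := (𝔹_h V̂_{h+1})(x,a) − Q̂_h(x,a) satisfies 0 ≤ ι_h(x,a) ≤ 2Γ_h(x,a) for all (x,a) ∈ S×A and h ∈ [H]. -/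
open Finset

/-- Model estimation error bound under pessimistic construction: if
`Q̂_h = max(0, min(H−h+1, 𝔹̂_h V̂_{h+1} − Γ_h))`, `V̂_h(x) = ⟨Q̂_h(x,·), π_h(·|x)⟩`,
`V̂_{H+1} = 0`, and `|𝔹̂_h V̂_{h+1} − 𝔹_h V̂_{h+1}| ≤ Γ_h` pointwise, then
`0 ≤ ι_h(x,a) ≤ 2 Γ_h(x,a)` where `ι_h = 𝔹_h V̂_{h+1} − Q̂_h`. -/
theorem model_estimation_error_bound
    {S A : Type*} [Fintype S] [Fintype A]
    (H : ℕ)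
    (P : ℕ → S → A → S → ℝ) (r : ℕ → S → A → ℝ)
    (hP_nonneg : ∀ h x a x', 0 ≤ P h x a x')
    (hP_sum : ∀ h x a, ∑ x', P h x a x' = 1)
    (hr : ∀ h x a, r h x a ∈ Set.Icc (0 : ℝ) 1)
    (π : ℕ → S → A → ℝ)
    (hπ_nonneg : ∀ h x a, 0 ≤ π h x a)
    (hπ_sum : ∀ h x, ∑ a, π h x a = 1)
    (Γ : ℕ → S → A → ℝ) (hΓ : ∀ h x a, 0 ≤ Γ h x a)
    (Bhat : ℕ → S → A → ℝ)   -- estimated Bellman backup (𝔹̂_h V̂_{h+1})(x,a)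
    (Qhat : ℕ → S → A → ℝ) (Vhat : ℕ → S → ℝ)
    (hQhat : ∀ h, 1 ≤ h → h ≤ H → ∀ x a,
      Qhat h x a = max 0 (min ((H : ℝ) - h + 1) (Bhat h x a - Γ h x a)))
    (hVhat : ∀ h, 1 ≤ h → h ≤ H → ∀ x, Vhat h x = ∑ a, π h x a * Qhat h x a)
    (hVhat_end : ∀ x, Vhat (H + 1) x = 0)
    -- uncertainty quantifier condition: |𝔹̂_h V̂_{h+1} − 𝔹_h V̂_{h+1}| ≤ Γ_h
    (hO : ∀ h, 1 ≤ h → h ≤ H → ∀ x a,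
      |Bhat h x a - (r h x a + ∑ x', P h x a x' * Vhat (h + 1) x')| ≤ Γ h x a) :
    ∀ h, 1 ≤ h → h ≤ H → ∀ x a,
      0 ≤ (r h x a + ∑ x', P h x a x' * Vhat (h + 1) x') - Qhat h x a ∧
      (r h x a + ∑ x', P h x a x' * Vhat (h + 1) x') - Qhat h x a ≤ 2 * Γ h x a := by

  intro h h1 hH x a
  set B : ℝ := r h x a + ∑ x', P h x a x' * Vhat (h + 1) x' with hB
  -- bound Vhat (h+1) x' ∈ [0, H - h]
  have hV : ∀ x', 0 ≤ Vhat (h + 1) x' ∧ Vhat (h + 1) x' ≤ (H : ℝ) - h := by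
    intro x'
    rcases eq_or_lt_of_le hH with heq | hlt
    · subst heq
      rw [hVhat_end]
      constructor <;> simp
    · have h1' : 1 ≤ h + 1 := by omega
      have hH' : h + 1 ≤ H := by omega
      have hQ : ∀ a, 0 ≤ Qhat (h + 1) x' a ∧ Qhat (h + 1) x' a ≤ (H : ℝ) - h := by
        intro a
        rw [hQhat (h+1) h1' hH']
        constructor
        · exact le_max_left _ _
        · have : ((H : ℝ) - (h + 1 : ℕ) + 1) = (H : ℝ) - h := by push_cast; ring
          rw [this]
          have hub : min ((H : ℝ) - h) (Bhat (h+1) x' a - Γ (h+1) x' a) ≤ (H:ℝ) - h :=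
            min_le_left _ _
          have h0 : (0:ℝ) ≤ (H:ℝ) - h := by
            have : (h:ℝ) ≤ H := by exact_mod_cast le_of_lt hlt
            linarith
          exact max_le h0 hub
      rw [hVhat (h+1) h1' hH']
      constructor
      · exact Finset.sum_nonneg fun a _ =>
          mul_nonneg (hπ_nonneg _ _ _) (hQ a).1
      · calc ∑ a, π (h+1) x' a * Qhat (h+1) x' a
            ≤ ∑ a, π (h+1) x' a * ((H:ℝ) - h) := by
              refine Finset.sum_le_sum fun a _ => ?_
              exact mul_le_mul_of_nonneg_left (hQ a).2 (hπ_nonneg _ _ _)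
          _ = (H:ℝ) - h := by rw [← Finset.sum_mul, hπ_sum, one_mul]
  -- bound B ∈ [0, H - h + 1]
  have hBl : 0 ≤ B := by
    have := (hr h x a).1
    have hs : 0 ≤ ∑ x', P h x a x' * Vhat (h+1) x' :=
      Finset.sum_nonneg fun x' _ => mul_nonneg (hP_nonneg _ _ _ _) (hV x').1
    simp only [hB]; linarith
  have hBu : B ≤ (H : ℝ) - h + 1 := by
    have hr1 := (hr h x a).2
    have hs : ∑ x', P h x a x' * Vhat (h+1) x' ≤ (H:ℝ) - h := by
      calc ∑ x', P h x a x' * Vhat (h+1) x'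
          ≤ ∑ x', P h x a x' * ((H:ℝ) - h) := by
            refine Finset.sum_le_sum fun x' _ => ?_
            exact mul_le_mul_of_nonneg_left (hV x').2 (hP_nonneg _ _ _ _)
        _ = (H:ℝ) - h := by rw [← Finset.sum_mul, hP_sum, one_mul]
    simp only [hB]; linarith
  have habs := hO h h1 hH x a
  rw [abs_le] at habs
  rw [hQhat h h1 hH x a]
  have hG := hΓ h x a
  constructor
  · have : max 0 (min ((H:ℝ) - h + 1) (Bhat h x a - Γ h x a)) ≤ B := by
      apply max_le hBl
      calc min ((H:ℝ) - h + 1) (Bhat h x a - Γ h x a) ≤ Bhat h x a - Γ h x a :=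
            min_le_right _ _
        _ ≤ B := by linarith [habs.2]
    linarith
  · have : B - 2 * Γ h x a ≤ max 0 (min ((H:ℝ) - h + 1) (Bhat h x a - Γ h x a)) := by
      have h2 : B - 2 * Γ h x a ≤ min ((H:ℝ) - h + 1) (Bhat h x a - Γ h x a) := by
        apply le_min
        · linarith
        · linarith [habs.1]
      exact h2.trans (le_max_right _ _)
    linarith
end

section
/- Let π and π̂ be two policies in a finite-horizon episodic MDP, and let Q̂_h, V̂_h be any functions satisfying V̂_h(x) = ⟨Q̂_h(x,·), π̂_h(·|x)⟩ and V̂_{H+1} = 0, with estimation error ι_h(x,a) = (𝔹_h V̂_{h+1})(x,a) − Q̂_h(x,a). Then the value difference decomposes as V^π_1(x₁) − V̂_1(x₁) = Σ_{h=1}^H 𝔼_π[⟨Q̂_h(s_h,·), π_h(·|s_h) − π̂_h(·|s_h)⟩ | s₁ = x₁] + Σ_{h=1}^H 𝔼_π[ι_h(s_h, a_h) | s₁ = x₁], where 𝔼_π denotes expectation over trajectories generated by the true transitions P_h and policy π. -/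
open Finset

/-- Extended value difference decomposition: for any policies `π`, `π̂`, and any
`Q̂_h` with `V̂_h(x) = ⟨Q̂_h(x,·), π̂_h(·|x)⟩`, `V̂_{H+1} = 0`, and estimation error
`ι_h = 𝔹_h V̂_{h+1} − Q̂_h`,
`V^π_1(x₁) − V̂_1(x₁) = Σ_h 𝔼_π[⟨Q̂_h(s_h,·), π_h − π̂_h⟩] + Σ_h 𝔼_π[ι_h(s_h,a_h)]`,
where the expectations are written via the occupancy measure `d` of `π`. -/
theorem extended_value_difference
    {S A : Type*} [Fintype S] [Fintype A] [DecidableEq S]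
    (H : ℕ) (hH : 1 ≤ H) (x₁ : S)
    (P : ℕ → S → A → S → ℝ) (r : ℕ → S → A → ℝ)
    (hP_nonneg : ∀ h x a x', 0 ≤ P h x a x')
    (hP_sum : ∀ h x a, ∑ x', P h x a x' = 1)
    (hr : ∀ h x a, r h x a ∈ Set.Icc (0 : ℝ) 1)
    (π πhat : ℕ → S → A → ℝ)
    (hπ_nonneg : ∀ h x a, 0 ≤ π h x a) (hπ_sum : ∀ h x, ∑ a, π h x a = 1)
    (hπhat_nonneg : ∀ h x a, 0 ≤ πhat h x a) (hπhat_sum : ∀ h x, ∑ a, πhat h x a = 1)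
    (Qhat : ℕ → S → A → ℝ) (Vhat : ℕ → S → ℝ)
    (hVhat : ∀ h, 1 ≤ h → h ≤ H → ∀ x, Vhat h x = ∑ a, πhat h x a * Qhat h x a)
    (hVhat_end : ∀ x, Vhat (H + 1) x = 0)
    (Qtrue : ℕ → S → A → ℝ) (Vtrue : ℕ → S → ℝ)
    (hQtrue : ∀ h, 1 ≤ h → h ≤ H → ∀ x a,
      Qtrue h x a = r h x a + ∑ x', P h x a x' * Vtrue (h + 1) x')
    (hVtrue : ∀ h, 1 ≤ h → h ≤ H → ∀ x, Vtrue h x = ∑ a, π h x a * Qtrue h x a)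
    (hVtrue_end : ∀ x, Vtrue (H + 1) x = 0)
    -- occupancy measure of π started at s₁ = x₁
    (d : ℕ → S → ℝ)
    (hd1 : ∀ x, d 1 x = if x = x₁ then 1 else 0)
    (hdrec : ∀ h, 1 ≤ h → h ≤ H → ∀ x',
      d (h + 1) x' = ∑ x, ∑ a, d h x * π h x a * P h x a x') :
    Vtrue 1 x₁ - Vhat 1 x₁ =
      (∑ h ∈ Finset.Icc 1 H, ∑ x,
        d h x * ∑ a, Qhat h x a * (π h x a - πhat h x a)) +
      (∑ h ∈ Finset.Icc 1 H, ∑ x, ∑ a,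
        d h x * π h x a *
          ((r h x a + ∑ x', P h x a x' * Vhat (h + 1) x') - Qhat h x a)) := by
  classical
  set F : ℕ → ℝ := fun h => ∑ x, d h x * (Vtrue h x - Vhat h x) with hF
  have hF1 : F 1 = Vtrue 1 x₁ - Vhat 1 x₁ := by
    simp [hF, hd1, ite_mul]
  have hFend : F (H + 1) = 0 := by
    simp [hF, hVtrue_end, hVhat_end]
  have key : ∀ h, 1 ≤ h → h ≤ H →
      F h - F (h + 1) =
        (∑ x, d h x * ∑ a, Qhat h x a * (π h x a - πhat h x a)) +
        (∑ x, ∑ a, d h x * π h x a *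
          ((r h x a + ∑ x', P h x a x' * Vhat (h + 1) x') - Qhat h x a)) := by
    intro h h1 h2
    have hdelta : ∀ x a, ∑ x', d h x * π h x a * P h x a x' *
          (Vtrue (h + 1) x' - Vhat (h + 1) x')
        = d h x * π h x a * ((∑ x', P h x a x' * Vtrue (h + 1) x') -
            ∑ x', P h x a x' * Vhat (h + 1) x') := by
      intro x a
      rw [← Finset.sum_sub_distrib, Finset.mul_sum]
      exact Finset.sum_congr rfl fun x' _ => by ring
    have hFsucc : F (h + 1) =
        ∑ x, ∑ a, d h x * π h x a * ((∑ x', P h x a x' * Vtrue (h + 1) x') -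
          ∑ x', P h x a x' * Vhat (h + 1) x') := by
      simp only [hF]
      calc ∑ x', d (h + 1) x' * (Vtrue (h + 1) x' - Vhat (h + 1) x')
          = ∑ x', ∑ x, ∑ a, d h x * π h x a * P h x a x' *
              (Vtrue (h + 1) x' - Vhat (h + 1) x') := by
            refine Finset.sum_congr rfl fun x' _ => ?_
            rw [hdrec h h1 h2 x', Finset.sum_mul]
            exact Finset.sum_congr rfl fun x _ => by rw [Finset.sum_mul]
        _ = ∑ x, ∑ a, ∑ x', d h x * π h x a * P h x a x' *
              (Vtrue (h + 1) x' - Vhat (h + 1) x') := by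
            rw [Finset.sum_comm]
            exact Finset.sum_congr rfl fun x _ => Finset.sum_comm
        _ = ∑ x, ∑ a, d h x * π h x a * ((∑ x', P h x a x' * Vtrue (h + 1) x') -
              ∑ x', P h x a x' * Vhat (h + 1) x') :=
            Finset.sum_congr rfl fun x _ => Finset.sum_congr rfl fun a _ => hdelta x a
    rw [hFsucc]
    simp only [hF]
    rw [← Finset.sum_sub_distrib, ← Finset.sum_add_distrib]
    refine Finset.sum_congr rfl fun x _ => ?_
    rw [hVtrue h h1 h2 x, hVhat h h1 h2 x]
    simp only [hQtrue h h1 h2]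
    rw [mul_sub, Finset.mul_sum, Finset.mul_sum, Finset.mul_sum,
      ← Finset.sum_sub_distrib, ← Finset.sum_sub_distrib, ← Finset.sum_add_distrib]
    exact Finset.sum_congr rfl fun a _ => by ring
  have tele : ∑ i ∈ Finset.range H, (F (1 + i) - F (1 + i + 1)) = F 1 - F (1 + H) := by
    exact Finset.sum_range_sub' (fun i => F (1 + i)) H
  rw [← hF1, ← Finset.sum_add_distrib]
  have : (∑ h ∈ Finset.Icc 1 H,
      ((∑ x, d h x * ∑ a, Qhat h x a * (π h x a - πhat h x a)) +
       ∑ x, ∑ a, d h x * π h x a *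
          ((r h x a + ∑ x', P h x a x' * Vhat (h + 1) x') - Qhat h x a)))
      = ∑ i ∈ Finset.range H, (F (1 + i) - F (1 + i + 1)) := by
    rw [← Finset.Ico_add_one_right_eq_Icc, Finset.sum_Ico_eq_sum_range]
    refine Finset.sum_congr (by norm_num) fun i hi => ?_
    have hi' : i < H := Finset.mem_range.mp hi
    rw [key (1 + i) (by omega) (by omega)]
  rw [this, tele]
  have : (1 : ℕ) + H = H + 1 := by omega
  rw [this, hFend, sub_zero]
end

section
/- Under the pessimism conditions (Q̂_h = max(0, min(H−h+1, 𝔹̂_h V̂_{h+1} − Γ_h)), V̂_h(x) = ⟨Q̂_h(x,·), π_h(·|x)⟩, and |(𝔹̂_h V̂_{h+1})(x,a) − (𝔹_h V̂_{h+1})(x,a)| ≤ Γ_h(x,a) for all (x,a,h)), the value of any policy π* evaluated pessimistically under its own policy weights satisfies V^{π*}_1(x₁) − V̂^{π*}_1(x₁) ≤ 2 Σ_{h=1}^H 𝔼_{π*}[Γ_h(s_h, a_h) | s₁ = x₁]. -/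
open Finset

/-- Suboptimality of pessimistic evaluation of a fixed policy `π*`: under the
pessimism conditions (clipped `Q̂`, `V̂` built from `π*` itself, and
`|𝔹̂_h V̂_{h+1} − 𝔹_h V̂_{h+1}| ≤ Γ_h`),
`V^{π*}_1(x₁) − V̂^{π*}_1(x₁) ≤ 2 Σ_{h=1}^H 𝔼_{π*}[Γ_h(s_h,a_h) | s₁ = x₁]`,
the expectation written via the occupancy measure `d` of `π*`. -/
theorem pessimistic_evaluation_suboptimality
    {S A : Type*} [Fintype S] [Fintype A] [DecidableEq S]
    (H : ℕ) (hH : 1 ≤ H) (x₁ : S)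
    (P : ℕ → S → A → S → ℝ) (r : ℕ → S → A → ℝ)
    (hP_nonneg : ∀ h x a x', 0 ≤ P h x a x')
    (hP_sum : ∀ h x a, ∑ x', P h x a x' = 1)
    (hr : ∀ h x a, r h x a ∈ Set.Icc (0 : ℝ) 1)
    (π : ℕ → S → A → ℝ)   -- the policy π*
    (hπ_nonneg : ∀ h x a, 0 ≤ π h x a) (hπ_sum : ∀ h x, ∑ a, π h x a = 1)
    (Γ : ℕ → S → A → ℝ) (hΓ : ∀ h x a, 0 ≤ Γ h x a)
    (Bhat : ℕ → S → A → ℝ)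
    (Qhat : ℕ → S → A → ℝ) (Vhat : ℕ → S → ℝ)
    (hQhat : ∀ h, 1 ≤ h → h ≤ H → ∀ x a,
      Qhat h x a = max 0 (min ((H : ℝ) - h + 1) (Bhat h x a - Γ h x a)))
    (hVhat : ∀ h, 1 ≤ h → h ≤ H → ∀ x, Vhat h x = ∑ a, π h x a * Qhat h x a)
    (hVhat_end : ∀ x, Vhat (H + 1) x = 0)
    (hO : ∀ h, 1 ≤ h → h ≤ H → ∀ x a,
      |Bhat h x a - (r h x a + ∑ x', P h x a x' * Vhat (h + 1) x')| ≤ Γ h x a)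
    (Qtrue : ℕ → S → A → ℝ) (Vtrue : ℕ → S → ℝ)
    (hQtrue : ∀ h, 1 ≤ h → h ≤ H → ∀ x a,
      Qtrue h x a = r h x a + ∑ x', P h x a x' * Vtrue (h + 1) x')
    (hVtrue : ∀ h, 1 ≤ h → h ≤ H → ∀ x, Vtrue h x = ∑ a, π h x a * Qtrue h x a)
    (hVtrue_end : ∀ x, Vtrue (H + 1) x = 0)
    -- occupancy measure of π* started at s₁ = x₁
    (d : ℕ → S → ℝ)
    (hd1 : ∀ x, d 1 x = if x = x₁ then 1 else 0)
    (hdrec : ∀ h, 1 ≤ h → h ≤ H → ∀ x',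
      d (h + 1) x' = ∑ x, ∑ a, d h x * π h x a * P h x a x') :
    Vtrue 1 x₁ - Vhat 1 x₁ ≤
      2 * ∑ h ∈ Finset.Icc 1 H, ∑ x, ∑ a, d h x * π h x a * Γ h x a := by
  -- nonnegativity of the occupancy measure
  have hd_nonneg : ∀ h, 1 ≤ h → h ≤ H + 1 → ∀ x, 0 ≤ d h x := by
    intro h h1
    induction h, h1 using Nat.le_induction with
    | base => intro _ x; rw [hd1]; split <;> norm_num
    | succ n hn ih =>
        intro hn1 x
        have hnH : n ≤ H := by omega
        rw [hdrec n hn hnH]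
        apply Finset.sum_nonneg; intro y _
        apply Finset.sum_nonneg; intro a _
        have := ih (by omega) y
        have := hπ_nonneg n y a
        have := hP_nonneg n y a x
        positivity
  -- bounds on Vhat : 0 ≤ Vhat h x ≤ H - h + 1 for 1 ≤ h ≤ H+1
  have hVhat_bd : ∀ h, 1 ≤ h → h ≤ H + 1 → ∀ x,
      0 ≤ Vhat h x ∧ Vhat h x ≤ (H : ℝ) - h + 1 := by
    intro h h1 hle x
    rcases eq_or_lt_of_le hle with hEq | hlt
    · subst hEq
      rw [hVhat_end]
      constructor
      · exact le_refl _
      · push_cast; linarith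
    · have hle' : h ≤ H := by omega
      have hcast : (h : ℝ) ≤ (H : ℝ) := by exact_mod_cast hle'
      have hb : (0:ℝ) ≤ (H : ℝ) - h + 1 := by linarith
      rw [hVhat h h1 hle']
      constructor
      · apply Finset.sum_nonneg; intro a _
        have hq : 0 ≤ Qhat h x a := by rw [hQhat h h1 hle' x a]; exact le_max_left _ _
        exact mul_nonneg (hπ_nonneg h x a) hq
      · calc ∑ a, π h x a * Qhat h x a ≤ ∑ a, π h x a * ((H : ℝ) - h + 1) := by
              apply Finset.sum_le_sum; intro a _
              apply mul_le_mul_of_nonneg_left _ (hπ_nonneg h x a)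
              rw [hQhat h h1 hle' x a]
              exact max_le hb (min_le_left _ _)
            _ = (H : ℝ) - h + 1 := by rw [← Finset.sum_mul, hπ_sum h x, one_mul]
  -- upper bound on Vtrue : Vtrue h x ≤ H - h + 1 for 1 ≤ h ≤ H+1
  have hVtrue_ub : ∀ n h, h + n = H + 1 → 1 ≤ h → ∀ x,
      Vtrue h x ≤ (H : ℝ) - h + 1 := by
    intro n
    induction n with
    | zero =>
        intro h hh h1 x
        have : h = H + 1 := by omega
        subst this
        rw [hVtrue_end]; push_cast; linarith
    | succ m ih =>
        intro h hh h1 x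
        have hle' : h ≤ H := by omega
        have ihv : ∀ y, Vtrue (h + 1) y ≤ (H : ℝ) - ((h:ℝ)+1) + 1 := by
          intro y
          have := ih (h+1) (by omega) (by omega) y
          push_cast at this ⊢; linarith
        rw [hVtrue h h1 hle']
        calc ∑ a, π h x a * Qtrue h x a ≤ ∑ a, π h x a * ((H : ℝ) - h + 1) := by
              apply Finset.sum_le_sum; intro a _
              apply mul_le_mul_of_nonneg_left _ (hπ_nonneg h x a)
              rw [hQtrue h h1 hle' x a]
              have hr1 := (hr h x a).2
              have hsum : ∑ x', P h x a x' * Vtrue (h+1) x'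
                  ≤ ∑ x', P h x a x' * ((H : ℝ) - (h+1) + 1) := by
                apply Finset.sum_le_sum; intro x' _
                exact mul_le_mul_of_nonneg_left (ihv x') (hP_nonneg h x a x')
              rw [← Finset.sum_mul, hP_sum h x a, one_mul] at hsum
              push_cast at hsum ⊢
              linarith
            _ = (H : ℝ) - h + 1 := by rw [← Finset.sum_mul, hπ_sum h x, one_mul]
  -- key pointwise bound on Q differences
  have key : ∀ h, 1 ≤ h → h ≤ H → ∀ x a,
      Qtrue h x a - Qhat h x a ≤ 2 * Γ h x a
        + ∑ x', P h x a x' * (Vtrue (h+1) x' - Vhat (h+1) x') := by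
    intro h h1 hle x a
    have hO' := hO h h1 hle x a
    rw [abs_le] at hO'
    have hq : min ((H : ℝ) - h + 1) (Bhat h x a - Γ h x a) ≤ Qhat h x a := by
      rw [hQhat h h1 hle x a]; exact le_max_right _ _
    have hsplit : ∑ x', P h x a x' * (Vtrue (h+1) x' - Vhat (h+1) x')
        = ∑ x', P h x a x' * Vtrue (h+1) x' - ∑ x', P h x a x' * Vhat (h+1) x' := by
      rw [← Finset.sum_sub_distrib]; exact Finset.sum_congr rfl fun x' _ => by ring
    rw [hQtrue h h1 hle x a, hsplit]
    rcases min_cases ((H : ℝ) - h + 1) (Bhat h x a - Γ h x a) with ⟨hmin, _⟩ | ⟨hmin, _⟩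
    · -- min is H - h + 1
      rw [hmin] at hq
      have hr1 := (hr h x a).2
      have hVt : ∑ x', P h x a x' * Vtrue (h+1) x'
          ≤ ∑ x', P h x a x' * Vtrue (h+1) x' := le_refl _
      have hVhb : ∑ x', P h x a x' * Vhat (h+1) x' ≤ (H : ℝ) - h := by
        have : ∑ x', P h x a x' * Vhat (h+1) x'
            ≤ ∑ x', P h x a x' * ((H : ℝ) - (h+1) + 1) := by
          apply Finset.sum_le_sum; intro x' _
          have hb' := (hVhat_bd (h+1) (by omega) (by omega) x').2
          push_cast at hb'
          exact mul_le_mul_of_nonneg_left hb' (hP_nonneg h x a x')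
        rw [← Finset.sum_mul, hP_sum h x a, one_mul] at this
        push_cast at this ⊢
        linarith
      have hg := hΓ h x a
      linarith
    · -- min is Bhat - Γ
      rw [hmin] at hq
      linarith [hO'.1]
  -- aggregate differences under the occupancy measure
  set D : ℕ → ℝ := fun h => ∑ x, d h x * (Vtrue h x - Vhat h x) with hD
  have step : ∀ h, 1 ≤ h → h ≤ H →
      D h ≤ D (h+1) + 2 * ∑ x, ∑ a, d h x * π h x a * Γ h x a := by
    intro h h1 hle
    have e1 : D h = ∑ x, ∑ a, d h x * π h x a * (Qtrue h x a - Qhat h x a) := by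
      simp only [hD]
      apply Finset.sum_congr rfl; intro x _
      rw [hVtrue h h1 hle x, hVhat h h1 hle x, ← Finset.sum_sub_distrib,
        Finset.mul_sum]
      exact Finset.sum_congr rfl fun a _ => by ring
    have e2 : ∑ x, ∑ a, d h x * π h x a * (Qtrue h x a - Qhat h x a)
        ≤ ∑ x, ∑ a, d h x * π h x a * (2 * Γ h x a
            + ∑ x', P h x a x' * (Vtrue (h+1) x' - Vhat (h+1) x')) := by
      apply Finset.sum_le_sum; intro x _
      apply Finset.sum_le_sum; intro a _
      exact mul_le_mul_of_nonneg_left (key h h1 hle x a)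
        (mul_nonneg (hd_nonneg h h1 (by omega) x) (hπ_nonneg h x a))
    have e3 : ∑ x, ∑ a, d h x * π h x a * (2 * Γ h x a
            + ∑ x', P h x a x' * (Vtrue (h+1) x' - Vhat (h+1) x'))
        = D (h+1) + 2 * ∑ x, ∑ a, d h x * π h x a * Γ h x a := by
      have eD : D (h+1) = ∑ x, ∑ a, ∑ x',
          d h x * π h x a * (P h x a x' * (Vtrue (h+1) x' - Vhat (h+1) x')) := by
        simp only [hD]
        have e4 : ∀ x', d (h+1) x' * (Vtrue (h+1) x' - Vhat (h+1) x')
            = ∑ x, ∑ a, d h x * π h x a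
                * (P h x a x' * (Vtrue (h+1) x' - Vhat (h+1) x')) := by
          intro x'
          rw [hdrec h h1 hle x', Finset.sum_mul]
          apply Finset.sum_congr rfl; intro x _
          rw [Finset.sum_mul]
          exact Finset.sum_congr rfl fun a _ => by ring
        calc ∑ x', d (h+1) x' * (Vtrue (h+1) x' - Vhat (h+1) x')
            = ∑ x', ∑ x, ∑ a, d h x * π h x a
                * (P h x a x' * (Vtrue (h+1) x' - Vhat (h+1) x')) :=
              Finset.sum_congr rfl fun x' _ => e4 x'
          _ = ∑ x, ∑ x', ∑ a, d h x * π h x a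
                * (P h x a x' * (Vtrue (h+1) x' - Vhat (h+1) x')) :=
              Finset.sum_comm
          _ = _ := Finset.sum_congr rfl fun x _ => Finset.sum_comm
      have e5 : ∑ x, ∑ a, d h x * π h x a * (2 * Γ h x a)
          = 2 * ∑ x, ∑ a, d h x * π h x a * Γ h x a := by
        rw [Finset.mul_sum]
        apply Finset.sum_congr rfl; intro x _
        rw [Finset.mul_sum]
        exact Finset.sum_congr rfl fun a _ => by ring
      calc ∑ x, ∑ a, d h x * π h x a * (2 * Γ h x a
              + ∑ x', P h x a x' * (Vtrue (h+1) x' - Vhat (h+1) x'))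
          = ∑ x, ∑ a, (d h x * π h x a * (2 * Γ h x a)
              + ∑ x', d h x * π h x a
                  * (P h x a x' * (Vtrue (h+1) x' - Vhat (h+1) x'))) := by
            apply Finset.sum_congr rfl; intro x _
            apply Finset.sum_congr rfl; intro a _
            rw [mul_add, Finset.mul_sum]
        _ = (∑ x, ∑ a, d h x * π h x a * (2 * Γ h x a))
              + ∑ x, ∑ a, ∑ x', d h x * π h x a
                  * (P h x a x' * (Vtrue (h+1) x' - Vhat (h+1) x')) := by
            rw [← Finset.sum_add_distrib]
            exact Finset.sum_congr rfl fun x _ => Finset.sum_add_distrib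
        _ = D (h+1) + 2 * ∑ x, ∑ a, d h x * π h x a * Γ h x a := by
            rw [eD, e5]; ring
    calc D h = _ := e1
      _ ≤ _ := e2
      _ = _ := e3
  -- downward induction along the horizon
  have claim : ∀ n h, h + n = H + 1 → 1 ≤ h →
      D h ≤ 2 * ∑ h' ∈ Finset.Icc h H, ∑ x, ∑ a, d h' x * π h' x a * Γ h' x a := by
    intro n
    induction n with
    | zero =>
        intro h hh h1
        have : h = H + 1 := by omega
        subst this
        have : D (H+1) = 0 := by
          simp only [hD]
          apply Finset.sum_eq_zero; intro x _
          rw [hVtrue_end, hVhat_end]; ring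
        rw [this, Finset.Icc_eq_empty (by omega)]
        simp
    | succ m ih =>
        intro h hh h1
        have hle : h ≤ H := by omega
        have hins : Finset.Icc h H = insert h (Finset.Icc (h+1) H) := by
          ext k; simp only [Finset.mem_Icc, Finset.mem_insert]; omega
        have hnot : h ∉ Finset.Icc (h+1) H := by simp
        rw [hins, Finset.sum_insert hnot]
        have := step h h1 hle
        have := ih (h+1) (by omega) (by omega)
        linarith
  have hD1 : D 1 = Vtrue 1 x₁ - Vhat 1 x₁ := by
    simp only [hD]
    rw [Finset.sum_eq_single x₁]
    · rw [hd1]; simp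
    · intro b _ hb; rw [hd1]; simp [hb]
    · intro hx; exact absurd (Finset.mem_univ x₁) hx
  have := claim H 1 (by omega) le_rfl
  rw [hD1] at this
  exact this
end

section
/- Consider a two-context contextual bandit (H = 1) with single state x₁, actions {a₁, a₂, a₃}, context set C = {v, w} with uniform context distribution, deterministic rewards r_v(a₁) = 1, r_v(a₂) = 0, r_v(a₃) = −1, r_w(a₁) = −1, r_w(a₂) = 1, r_w(a₃) = 1, and data collection distributions μ_v = (1−ε, ε, 0), μ_w = (0, 0, 1) for 0 < ε < 1. Then: (i) in the average MDP with reward distribution ℙ(r̄ = r | a) = 𝔼_c[ℙ(r_c = r|a)·μ_c(a)] / 𝔼_c[μ_c(a)], the expected rewards are r̄(a₁) = 1, r̄(a₂) = 0, r̄(a₃) = 1; (ii) any policy π̄ supported only on {a₁, a₃} has average true value 𝔼_{c∼C}[V^{π̄}_{c,1}(x₁)] = 0; (iii) the policy that deterministically plays a₂ achieves 𝔼_{c∼C}[V^π_{c,1}(x₁)] = 1/2; hence the optimal policy of the average MDP (which plays only a₁ and/or a₃) is suboptimal by 1/2 for the contextual objective. -/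
open Finset

/-- The two-context bandit counterexample: with contexts `v, w` drawn uniformly,
rewards `r_v = (1,0,−1)`, `r_w = (−1,1,1)` and data-collection distributions
`μ_v = (1−ε, ε, 0)`, `μ_w = (0,0,1)`:
(i) the average MDP has expected rewards `r̄ = (1, 0, 1)`;
(ii) any policy supported on `{a₁, a₃}` has average true value `0`;
(iii) the policy that deterministically plays `a₂` has average true value `1/2`. -/
theorem average_mdp_counterexample (ε : ℝ) (hε0 : 0 < ε) (hε1 : ε < 1) :
    let rv : Fin 3 → ℝ := ![1, 0, -1]
    let rwd : Fin 3 → ℝ := ![-1, 1, 1]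
    let μv : Fin 3 → ℝ := ![1 - ε, ε, 0]
    let μw : Fin 3 → ℝ := ![0, 0, 1]
    let rbar : Fin 3 → ℝ := fun a =>
      ((1 / 2) * μv a * rv a + (1 / 2) * μw a * rwd a) /
        ((1 / 2) * μv a + (1 / 2) * μw a)
    (rbar 0 = 1 ∧ rbar 1 = 0 ∧ rbar 2 = 1) ∧
    (∀ p : Fin 3 → ℝ, (∀ a, 0 ≤ p a) → (∑ a, p a) = 1 → p 1 = 0 →
      (1 / 2) * (∑ a, p a * rv a) + (1 / 2) * (∑ a, p a * rwd a) = 0) ∧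
    ((1 / 2) * (∑ a, (if a = 1 then (1 : ℝ) else 0) * rv a) +
      (1 / 2) * (∑ a, (if a = 1 then (1 : ℝ) else 0) * rwd a) = 1 / 2) := by
  intro rv rwd μv μw rbar
  refine ⟨⟨?_, ?_, ?_⟩, ?_, ?_⟩
  · show ((1/2) * (1-ε) * 1 + (1/2) * 0 * (-1)) / ((1/2) * (1-ε) + (1/2) * 0) = 1
    rw [div_eq_one_iff_eq (by nlinarith)]; ring
  · show ((1/2) * ε * 0 + (1/2) * 0 * 1) / ((1/2) * ε + (1/2) * 0) = 0
    simp
  · show ((1/2) * 0 * (-1) + (1/2) * 1 * 1) / ((1/2) * 0 + (1/2) * 1) = 1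
    norm_num
  · intro p _ hs h1
    simp [Fin.sum_univ_three, rv, rwd] at hs ⊢
    rw [h1] at hs ⊢
    ring_nf
  · simp [Fin.sum_univ_three, rv, rwd]
end
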